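/- For all t > 0, ε ∈ (0,1), and bounded self-adjoint operators A, V, W on a Hilbert space with A ≥ 0: n(−t, A − V − W) ≤ n(−tε, εA − W) + n(−t(1−ε), (1−ε)A − V), where n(−s, T) denotes the supremum of dimensions of subspaces on which ⟨Tu,u⟩ < −s‖u‖². -/

import Mathlib

/-!
Only real parts of quadratic forms enter, and the inequality is the subadditivity
`n(-(a+b), S+T) ≤ n(-a, S) + n(-b, T)` for `S = εA - W`, `T = (1-ε)A - V`, `a = tε`, `b = t(1-ε)`.
It suffices to bound the dimension of a finite-dimensional subspace `M` on which
`Re⟨(S+T)u, u⟩ < -(a+b)‖u‖²`. Diagonalising the Hermitian part of the compression of `S + a` to `M`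
splits `M` into a subspace on which `Re⟨Su, u⟩ < -a‖u‖²` and a complementary one on which
`Re⟨Su, u⟩ ≥ -a‖u‖²`, hence `Re⟨Tu, u⟩ < -b‖u‖²`.
-/

open MeasureTheory Filter Topology ENNReal

/-- `counting s T` is the supremum of dimensions of subspaces `L` such that
`⟨Tu, u⟩ < -s ‖u‖²` for all nonzero `u ∈ L` (possibly infinite). -/
noncomputable def counting {H : Type*} [NormedAddCommGroup H] [InnerProductSpace ℂ H]
    (s : ℝ) (T : H →L[ℂ] H) : ℝ≥0∞ :=
  ⨆ (L : Submodule ℂ H) (_ : ∀ u ∈ L, u ≠ 0 → (inner ℂ (T u) u : ℂ).re < -s * ‖u‖ ^ 2),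
    ((Module.rank ℂ L).toENat : ℝ≥0∞)


open Module
open scoped InnerProductSpace

section Inertia

variable {𝕜 E : Type*} [RCLike 𝕜] [NormedAddCommGroup E] [InnerProductSpace 𝕜 E]

open RCLike

theorem Orthonormal.re_inner_map_sum_smul {ι : Type*} [Fintype ι] {v : ι → E}
    (hv : Orthonormal 𝕜 v) {B : E →ₗ[𝕜] E} {μ : ι → ℝ} (hBv : ∀ i, B (v i) = (μ i : 𝕜) • v i)
    (c : ι → 𝕜) : re ⟪B (∑ i, c i • v i), ∑ i, c i • v i⟫_𝕜 = ∑ i, μ i * ‖c i‖ ^ 2 := by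
  have hB : B (∑ i, c i • v i) = ∑ i, (μ i * c i) • v i := by
    simp [map_sum, hBv, smul_smul, mul_comm]
  rw [hB, hv.inner_sum, map_sum]
  refine Finset.sum_congr rfl fun i _ => ?_
  rw [map_mul (starRingEnd 𝕜), conj_ofReal, mul_assoc, RCLike.conj_mul, ← RCLike.ofReal_pow,
    ← RCLike.ofReal_mul, RCLike.ofReal_re]

theorem LinearMap.IsSymmetric.exists_inertia_split [FiniteDimensional 𝕜 E] {B : E →ₗ[𝕜] E}
    (hB : B.IsSymmetric) :
    ∃ N P : Submodule 𝕜 E, finrank 𝕜 N + finrank 𝕜 P = finrank 𝕜 E ∧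
      (∀ x ∈ N, x ≠ 0 → re ⟪B x, x⟫_𝕜 < 0) ∧ ∀ x ∈ P, 0 ≤ re ⟪B x, x⟫_𝕜 := by
  set b := hB.eigenvectorBasis rfl
  set μ := hB.eigenvalues rfl
  have hform (p : Fin (finrank 𝕜 E) → Prop) [Fintype {i // p i}] (c : {i // p i} → 𝕜) :
      re ⟪B (∑ i, c i • b i), ∑ i, c i • b i⟫_𝕜 = ∑ i : {i // p i}, μ i * ‖c i‖ ^ 2 :=
    (b.orthonormal.comp _ Subtype.val_injective).re_inner_map_sum_smul
      (fun i => hB.apply_eigenvectorBasis rfl i) c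
  have hrank (p : Fin (finrank 𝕜 E) → Prop) [Fintype {i // p i}] :
      finrank 𝕜 (Submodule.span 𝕜 (Set.range fun i : {i // p i} => b i)) =
        Fintype.card {i // p i} :=
    finrank_span_eq_card (b.orthonormal.comp _ Subtype.val_injective).linearIndependent
  refine ⟨Submodule.span 𝕜 (Set.range fun i : {i // μ i < 0} => b i),
    Submodule.span 𝕜 (Set.range fun i : {i // ¬ μ i < 0} => b i), ?_, ?_, ?_⟩
  · rw [hrank, hrank, Fintype.card_subtype_compl, Nat.add_sub_of_le (Fintype.card_subtype_le _),
      Fintype.card_fin]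
  · rintro x hx hx0
    obtain ⟨c, rfl⟩ := (Submodule.mem_span_range_iff_exists_fun 𝕜).1 hx
    obtain ⟨i, hi⟩ : ∃ i, c i ≠ 0 := by
      by_contra! h
      simp [h] at hx0
    rw [hform]
    refine Finset.sum_neg' (fun j _ => mul_nonpos_of_nonpos_of_nonneg j.2.le (by positivity))
      ⟨i, Finset.mem_univ _, mul_neg_of_neg_of_pos i.2 (by positivity)⟩
  · rintro x hx
    obtain ⟨c, rfl⟩ := (Submodule.mem_span_range_iff_exists_fun 𝕜).1 hx
    rw [hform]
    exact Finset.sum_nonneg fun j _ => mul_nonneg (not_lt.1 j.2) (by positivity)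

theorem LinearMap.exists_inertia_split [FiniteDimensional 𝕜 E] (B : E →ₗ[𝕜] E) :
    ∃ N P : Submodule 𝕜 E, finrank 𝕜 N + finrank 𝕜 P = finrank 𝕜 E ∧
      (∀ x ∈ N, x ≠ 0 → re ⟪B x, x⟫_𝕜 < 0) ∧ ∀ x ∈ P, 0 ≤ re ⟪B x, x⟫_𝕜 := by
  have hsymm : (B + B.adjoint).IsSymmetric := fun x y => by
    rw [add_apply, add_apply, inner_add_left, inner_add_right, adjoint_inner_left,
      adjoint_inner_right, add_comm]
  have hre (x : E) : re ⟪(B + B.adjoint) x, x⟫_𝕜 = 2 * re ⟪B x, x⟫_𝕜 := by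
    rw [add_apply, inner_add_left, map_add, adjoint_inner_left, inner_re_symm x]
    ring
  obtain ⟨N, P, hrank, hN, hP⟩ := hsymm.exists_inertia_split
  refine ⟨N, P, hrank, fun x hx hx0 => ?_, fun x hx => ?_⟩
  · linarith [hre x, hN x hx hx0]
  · linarith [hre x, hP x hx]

end Inertia

section Counting

variable {H : Type*} [NormedAddCommGroup H] [InnerProductSpace ℂ H]

def ReInnerLtOn (T : H →L[ℂ] H) (c : ℝ) (L : Submodule ℂ H) : Prop :=
  ∀ u ∈ L, u ≠ 0 → (inner ℂ (T u) u : ℂ).re < c * ‖u‖ ^ 2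

theorem ReInnerLtOn.mono {T : H →L[ℂ] H} {c : ℝ} {L M : Submodule ℂ H} (hL : ReInnerLtOn T c L)
    (hML : M ≤ L) : ReInnerLtOn T c M :=
  fun u hu => hL u (hML hu)

theorem finrank_le_counting {s : ℝ} {T : H →L[ℂ] H} (L : Submodule ℂ H) [FiniteDimensional ℂ L]
    (hL : ReInnerLtOn T (-s) L) : (finrank ℂ L : ℝ≥0∞) ≤ counting s T := by
  have := le_iSup₂ (f := fun (L : Submodule ℂ H) (_ : ReInnerLtOn T (-s) L) =>
    ((Module.rank ℂ L).toENat : ℝ≥0∞)) L hL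
  rwa [← finrank_eq_rank, Cardinal.toENat_nat] at this

theorem ENat.toENNReal_le_of_forall_natCast_le {m : ℕ∞} {c : ℝ≥0∞}
    (h : ∀ k : ℕ, (k : ℕ∞) ≤ m → (k : ℝ≥0∞) ≤ c) : (m : ℝ≥0∞) ≤ c := by
  induction m using ENat.recTopCoe with
  | top => simpa [← ENNReal.iSup_natCast] using fun k => h k le_top
  | coe k => simpa using h k le_rfl

theorem Submodule.exists_le_finiteDimensional_finrank_eq {K V : Type*} [DivisionRing K]
    [AddCommGroup V] [Module K V] {L : Submodule K V} {k : ℕ}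
    (hk : (k : Cardinal) ≤ Module.rank K L) :
    ∃ M ≤ L, FiniteDimensional K M ∧ finrank K M = k := by
  obtain ⟨s, hcard, hs⟩ := le_rank_iff_exists_linearIndependent_finset.1 hk
  refine ⟨(span K (s : Set L)).map L.subtype, map_subtype_le _ _, inferInstance, ?_⟩
  rw [finrank_map_subtype_eq, finrank_span_finset_eq_card hs, hcard]

theorem counting_le_of_forall_finrank_le {s : ℝ} {T : H →L[ℂ] H} {c : ℝ≥0∞}
    (h : ∀ (M : Submodule ℂ H) [FiniteDimensional ℂ M], ReInnerLtOn T (-s) M →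
      (finrank ℂ M : ℝ≥0∞) ≤ c) :
    counting s T ≤ c := by
  refine iSup₂_le fun L (hL : ReInnerLtOn T (-s) L) =>
    ENat.toENNReal_le_of_forall_natCast_le fun k hk => ?_
  obtain ⟨M, hML, _, rfl⟩ :=
    Submodule.exists_le_finiteDimensional_finrank_eq (Cardinal.natCast_le_toENat.1 hk)
  exact h M (hL.mono hML)

theorem finrank_le_counting_add {S T : H →L[ℂ] H} {a b : ℝ} (M : Submodule ℂ H)
    [FiniteDimensional ℂ M] (hM : ReInnerLtOn (S + T) (-(a + b)) M) :
    (finrank ℂ M : ℝ≥0∞) ≤ counting a S + counting b T := by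
  let C : M →ₗ[ℂ] M := M.orthogonalProjectionOnto.toLinearMap ∘ₗ S.toLinearMap ∘ₗ M.subtype +
    (a : ℂ) • LinearMap.id
  have hC (x : M) :
      (inner ℂ (C x) x : ℂ).re = (inner ℂ (S x) (x : H) : ℂ).re + a * ‖(x : H)‖ ^ 2 := by
    rw [LinearMap.add_apply, inner_add_left, Complex.add_re, LinearMap.comp_apply,
      LinearMap.comp_apply, ContinuousLinearMap.coe_coe,
      Submodule.inner_orthogonalProjectionOnto_eq_of_mem_right, LinearMap.smul_apply,
      LinearMap.id_apply, inner_smul_left, Complex.conj_ofReal, Complex.re_ofReal_mul,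
      Submodule.coe_inner, ← inner_self_eq_norm_sq (𝕜 := ℂ)]
    rfl
  obtain ⟨N, P, hrank, hN, hP⟩ := C.exists_inertia_split
  have hSN : ReInnerLtOn S (-a) (N.map M.subtype) := by
    rintro _ ⟨x, hx, rfl⟩ hx0
    rw [Submodule.subtype_apply] at hx0 ⊢
    have := hN x hx (by simpa using hx0)
    rw [RCLike.re_to_complex] at this
    linarith [hC x]
  have hTP : ReInnerLtOn T (-b) (P.map M.subtype) := by
    rintro _ ⟨x, hx, rfl⟩ hx0
    rw [Submodule.subtype_apply] at hx0 ⊢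
    have hx' := hM x x.2 hx0
    have hCx := hP x hx
    rw [add_apply, inner_add_left, Complex.add_re] at hx'
    rw [RCLike.re_to_complex] at hCx
    linarith [hC x]
  calc (finrank ℂ M : ℝ≥0∞) = finrank ℂ (N.map M.subtype) + finrank ℂ (P.map M.subtype) := by
        rw [Submodule.finrank_map_subtype_eq, Submodule.finrank_map_subtype_eq, ← hrank,
          Nat.cast_add]
    _ ≤ counting a S + counting b T :=
        add_le_add (finrank_le_counting _ hSN) (finrank_le_counting _ hTP)

theorem counting_add_le (S T : H →L[ℂ] H) (a b : ℝ) :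
    counting (a + b) (S + T) ≤ counting a S + counting b T :=
  counting_le_of_forall_finrank_le fun M _ hM => finrank_le_counting_add M hM

end Counting

theorem stmt6_general {H : Type*} [NormedAddCommGroup H] [InnerProductSpace ℂ H]
    (A V W : H →L[ℂ] H)
    (t ε : ℝ) :
    counting t (A - V - W) ≤
      counting (t * ε) ((ε : ℂ) • A - W) + counting (t * (1 - ε)) (((1 - ε : ℝ) : ℂ) • A - V) := by
  have hsplit : A - V - W = ((ε : ℂ) • A - W) + (((1 - ε : ℝ) : ℂ) • A - V) := by
    push_cast
    module
  have := counting_add_le ((ε : ℂ) • A - W) (((1 - ε : ℝ) : ℂ) • A - V) (t * ε) (t * (1 - ε))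
  rwa [← hsplit, show t * ε + t * (1 - ε) = t by ring] at this

theorem stmt6 {H : Type*} [NormedAddCommGroup H] [InnerProductSpace ℂ H] [CompleteSpace H]
    (A V W : H →L[ℂ] H) (hA : IsSelfAdjoint A) (hV : IsSelfAdjoint V) (hW : IsSelfAdjoint W)
    (hA0 : ∀ u : H, 0 ≤ (inner ℂ (A u) u : ℂ).re)
    (t ε : ℝ) (ht : 0 < t) (hε0 : 0 < ε) (hε1 : ε < 1) :
    counting t (A - V - W) ≤
      counting (t * ε) ((ε : ℂ) • A - W) + counting (t * (1 - ε)) (((1 - ε : ℝ) : ℂ) • A - V) :=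
  stmt6_general A V W t ε
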